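/- Let f : (0,∞) → ℝ be general monotone with constants C > 1 and λ = 2^ν, let α ∈ ℝ, and suppose ∫_0^1 t^{2α+1} |f(t)| dt < ∞ and that the limit of ∫_0^N t^{2α+1} f(t) dt exists as N → ∞. Then sup_{t > 0} t^{2α+2} |f(t)| < ∞. -/

import Mathlib

/-!
Write `γ = 2α + 1`, `β = γ + 1` and `u(x) = ∫_x^{2x} t^γ |f t| dt`. Since `f` moves by at most
its variation `V(x)` on `[x, 2x]`, `x^β |f x| ≲ u(x) + x^β V(x)`, and the GM condition bounds
`x^β V(x)` by the `2ν` blocks `u(y)`, `y ∈ [x/λ, λx]`. So everything reduces to the boundedness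
of `u`. Near `0` this is the integrability hypothesis. For `x ≥ 1`, convergence of
`∫ t^γ f` gives `|∫_p^q t^γ f| ≤ B`; on each of `n` equal pieces of `[x, 2x]` the function `f`
stays within the variation `δₖ` of the piece from its value at the left end, so the piece
contributes at most `B + 2 δₖ ∫ t^γ`. Hence `u(x) ≤ nB + O(x^β V(x) / n)`, and the best `n` gives
`u(x) ≤ 2B + O(√(B x^β V(x))) ≤ 2B + O(√(sup_{[1, λx]} u))`. Starting from the trivial bound
`u(x) = O(x^β)`, this square-root recursion lowers the exponent to `β/2, β/4, …`, so `u` is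
bounded.
-/

open MeasureTheory Filter Set

/-- `f : (0,∞) → ℝ` is general monotone with constants `C` and `l`. -/
def GMFun (C l : ℝ) (f : ℝ → ℝ) : Prop :=
  LocallyBoundedVariationOn f (Set.Ioi 0) ∧
  Filter.Tendsto f Filter.atTop (nhds 0) ∧
  ∀ x > (0:ℝ), eVariationOn f (Set.Icc x (2*x)) ≤
    ENNReal.ofReal (C * ∫ t in Set.Ioo (x/l) (l*x), |f t| / t)

theorem LocallyBoundedVariationOn.boundedVariationOn_Icc {α E : Type*} [LinearOrder α]
    [PseudoEMetricSpace E] {f : α → E} {s : Set α} [s.OrdConnected]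
    (hf : LocallyBoundedVariationOn f s) {a b : α} (ha : a ∈ s) (hb : b ∈ s) :
    BoundedVariationOn f (Icc a b) := by
  simpa [inter_eq_right.mpr (s.Icc_subset ha hb)] using hf a b ha hb

theorem BoundedVariationOn.integrableOn_Icc {f : ℝ → ℝ} {a b : ℝ}
    (hf : BoundedVariationOn f (Icc a b)) : IntegrableOn f (Icc a b) := by
  obtain ⟨p, q, hp, hq, rfl⟩ := hf.locallyBoundedVariationOn.exists_monotoneOn_sub_monotoneOn
  exact (hp.integrableOn_isCompact isCompact_Icc).sub (hq.integrableOn_isCompact isCompact_Icc)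

theorem LocallyBoundedVariationOn.aemeasurable_restrict {f : ℝ → ℝ} {s : Set ℝ}
    (hs : MeasurableSet s) (hf : LocallyBoundedVariationOn f s) :
    AEMeasurable f (volume.restrict s) := by
  obtain ⟨p, q, hp, hq, rfl⟩ := hf.exists_monotoneOn_sub_monotoneOn
  exact (aemeasurable_restrict_of_monotoneOn hs hp).sub (aemeasurable_restrict_of_monotoneOn hs hq)

theorem intervalIntegrable_continuousOn_mul {f w : ℝ → ℝ} {a b : ℝ} (hab : a ≤ b)
    (hw : ContinuousOn w (Icc a b)) (hf : IntegrableOn f (Icc a b)) :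
    IntervalIntegrable (fun t => w t * f t) volume a b :=
  (intervalIntegrable_iff_integrableOn_Icc_of_le hab).mpr (hf.continuousOn_mul hw isCompact_Icc)

theorem continuousOn_rpow_const_Icc {a b : ℝ} (ha : 0 < a) (γ : ℝ) :
    ContinuousOn (fun t : ℝ => t ^ γ) (Icc a b) :=
  continuousOn_id.rpow_const fun _ ht => Or.inl (ha.trans_le ht.1).ne'

theorem rpow_le_rpow_abs_mul_rpow {s t c : ℝ} (e : ℝ) (hs : 0 < s) (ht : 0 < t)
    (hst : s ≤ c * t) (hts : t ≤ c * s) : s ^ e ≤ c ^ |e| * t ^ e := by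
  have hc : 0 < c := pos_of_mul_pos_left (hs.trans_le hst) ht.le
  have hratio : (s / t) ^ e ≤ c ^ |e| := by
    rcases le_total 0 e with he | he
    · rw [abs_of_nonneg he]
      exact Real.rpow_le_rpow (by positivity) ((div_le_iff₀ ht).mpr hst) he
    · rw [abs_of_nonpos he, ← inv_div, Real.inv_rpow (by positivity), ← Real.rpow_neg (by positivity)]
      exact Real.rpow_le_rpow (by positivity) ((div_le_iff₀ hs).mpr hts) (neg_nonneg.mpr he)
  calc s ^ e = (s / t) ^ e * t ^ e := by
        rw [Real.div_rpow hs.le ht.le, div_mul_cancel₀ _ (Real.rpow_pos_of_pos ht e).ne']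
    _ ≤ c ^ |e| * t ^ e := by gcongr

theorem integral_mul_abs_le_abs_integral_add {f w : ℝ → ℝ} {a b δ : ℝ} (hab : a ≤ b)
    (hf : IntegrableOn f (Icc a b)) (hw : ContinuousOn w (Icc a b))
    (hw0 : ∀ t ∈ Icc a b, 0 ≤ w t) (hosc : ∀ t ∈ Icc a b, |f t - f a| ≤ δ) :
    ∫ t in a..b, w t * |f t| ≤ |∫ t in a..b, w t * f t| + 2 * δ * ∫ t in a..b, w t := by
  obtain ⟨σ, hσ, hσa⟩ : ∃ σ : ℝ, |σ| = 1 ∧ 0 ≤ σ * f a := by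
    rcases le_total 0 (f a) with h | h
    · exact ⟨1, abs_one, by simpa using h⟩
    · exact ⟨-1, by simp, by simpa using h⟩
  -- on an interval of oscillation `δ`, `f` keeps the sign `σ` of `f a` up to an error `δ`
  have hpt : ∀ t ∈ Icc a b, w t * |f t| ≤ σ * (w t * f t) + 2 * δ * w t := by
    intro t ht
    have hdist : |σ * f t - σ * f a| ≤ δ := by
      rw [← mul_sub, abs_mul, hσ, one_mul]; exact hosc t ht
    have habs : |f t| ≤ σ * f t + 2 * δ := by
      rw [← one_mul |f t|, ← hσ, ← abs_mul]
      cases abs_cases (σ * f t) <;> linarith [abs_le.mp hdist]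
    nlinarith [hw0 t ht]
  have hwf := intervalIntegrable_continuousOn_mul hab hw hf
  have hwabs := intervalIntegrable_continuousOn_mul hab hw hf.abs
  have hwi := hw.intervalIntegrable_of_Icc (μ := volume) hab
  calc ∫ t in a..b, w t * |f t| ≤ ∫ t in a..b, (σ * (w t * f t) + 2 * δ * w t) :=
        intervalIntegral.integral_mono_on hab hwabs ((hwf.const_mul σ).add (hwi.const_mul _)) hpt
    _ = σ * (∫ t in a..b, w t * f t) + 2 * δ * ∫ t in a..b, w t := by
        rw [intervalIntegral.integral_add (hwf.const_mul σ) (hwi.const_mul _),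
          intervalIntegral.integral_const_mul, intervalIntegral.integral_const_mul]
    _ ≤ |∫ t in a..b, w t * f t| + 2 * δ * ∫ t in a..b, w t := by
        gcongr
        calc σ * _ ≤ |σ * ∫ t in a..b, w t * f t| := le_abs_self _
          _ = _ := by rw [abs_mul, hσ, one_mul]

theorem integral_mul_abs_le_add_variationOnFromTo {f w : ℝ → ℝ} {a b p q B W : ℝ}
    (hf : BoundedVariationOn f (Icc a b)) (hw : ContinuousOn w (Icc a b))
    (hw0 : ∀ t ∈ Icc a b, 0 ≤ w t) (hwW : ∀ t ∈ Icc a b, w t ≤ W)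
    (hap : a ≤ p) (hpq : p ≤ q) (hqb : q ≤ b) (hB : |∫ t in p..q, w t * f t| ≤ B) :
    ∫ t in p..q, w t * |f t| ≤ B + 2 * (W * (q - p)) *
      (variationOnFromTo f (Icc a b) a q - variationOnFromTo f (Icc a b) a p) := by
  have hsub : Icc p q ⊆ Icc a b := Icc_subset_Icc hap hqb
  have ha : a ∈ Icc a b := ⟨le_rfl, hap.trans (hpq.trans hqb)⟩
  have hv := variationOnFromTo.monotoneOn hf.locallyBoundedVariationOn ha
  have hδ : 0 ≤ variationOnFromTo f (Icc a b) a q - variationOnFromTo f (Icc a b) a p :=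
    sub_nonneg.mpr (hv (hsub (left_mem_Icc.mpr hpq)) (hsub (right_mem_Icc.mpr hpq)) hpq)
  have hosc : ∀ t ∈ Icc p q, |f t - f p| ≤
      variationOnFromTo f (Icc a b) a q - variationOnFromTo f (Icc a b) a p := fun t ht =>
    (variationOnFromTo.abs_sub_le_sub_of_le hf.locallyBoundedVariationOn ha
      (hsub (left_mem_Icc.mpr hpq)) (hsub ht) ht.1).trans
      (by gcongr; exact hv (hsub ht) (hsub (right_mem_Icc.mpr hpq)) ht.2)
  have hwint : ∫ t in p..q, w t ≤ W * (q - p) := by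
    calc ∫ t in p..q, w t ≤ ∫ t in p..q, W :=
          intervalIntegral.integral_mono_on hpq ((hw.mono hsub).intervalIntegrable_of_Icc hpq)
            intervalIntegrable_const fun t ht => hwW t (hsub ht)
      _ = W * (q - p) := by rw [intervalIntegral.integral_const, smul_eq_mul, mul_comm]
  calc ∫ t in p..q, w t * |f t|
      ≤ |∫ t in p..q, w t * f t| + 2 * (variationOnFromTo f (Icc a b) a q -
          variationOnFromTo f (Icc a b) a p) * ∫ t in p..q, w t :=
        integral_mul_abs_le_abs_integral_add hpq (hf.integrableOn_Icc.mono_set hsub)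
          (hw.mono hsub) (fun t ht => hw0 t (hsub ht)) hosc
    _ ≤ B + 2 * (variationOnFromTo f (Icc a b) a q -
          variationOnFromTo f (Icc a b) a p) * (W * (q - p)) := by gcongr
    _ = _ := by ring

theorem integral_mul_abs_le_nat_mul_add_variation_div {f w : ℝ → ℝ} {a b B W : ℝ} {n : ℕ}
    (hn : 0 < n) (hab : a ≤ b) (hf : BoundedVariationOn f (Icc a b))
    (hw : ContinuousOn w (Icc a b)) (hw0 : ∀ t ∈ Icc a b, 0 ≤ w t) (hwW : ∀ t ∈ Icc a b, w t ≤ W)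
    (hB : ∀ p q, a ≤ p → p ≤ q → q ≤ b → |∫ t in p..q, w t * f t| ≤ B) :
    ∫ t in a..b, w t * |f t| ≤
      n * B + 2 * (W * (b - a)) * (eVariationOn f (Icc a b)).toReal / n := by
  set h := (b - a) / n
  set r : ℕ → ℝ := fun k => a + k * h
  have hr_mono : Monotone r := fun i j hij => by
    simp only [r, h]; gcongr
  have hr0 : r 0 = a := by simp [r]
  have hrn : r n = b := by simp only [r, h]; field_simp; ring
  have hr_mem : ∀ k ≤ n, r k ∈ Icc a b := fun k hk =>
    ⟨hr0 ▸ hr_mono (Nat.zero_le k), hrn ▸ hr_mono hk⟩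
  have hlen : ∀ k, r (k + 1) - r k = h := fun k => by simp only [r]; push_cast; ring
  set v := variationOnFromTo f (Icc a b) a
  have hpiece : ∀ k < n, ∫ t in r k..r (k + 1), w t * |f t| ≤
      B + 2 * (W * h) * (v (r (k + 1)) - v (r k)) := fun k hk => by
    have hrk := hr_mono k.le_succ
    rw [← hlen k]
    exact integral_mul_abs_le_add_variationOnFromTo hf hw hw0 hwW (hr_mem k hk.le).1 hrk
      (hr_mem (k + 1) hk).2 (hB _ _ (hr_mem k hk.le).1 hrk (hr_mem (k + 1) hk).2)
  have hint : ∀ k < n, IntervalIntegrable (fun t => w t * |f t|) volume (r k) (r (k + 1)) :=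
    fun k hk => (intervalIntegrable_continuousOn_mul hab hw hf.integrableOn_Icc.abs).mono_set
      (by rw [uIcc_of_le hab]; exact uIcc_subset_Icc (hr_mem k hk.le) (hr_mem (k + 1) hk))
  have hva : v a = 0 := variationOnFromTo.self f _ a
  have hvb : v b = (eVariationOn f (Icc a b)).toReal := by
    simp only [v, variationOnFromTo.eq_of_le _ _ hab, inter_self]
  calc ∫ t in a..b, w t * |f t| = ∑ k ∈ Finset.range n, ∫ t in r k..r (k + 1), w t * |f t| := by
        rw [intervalIntegral.sum_integral_adjacent_intervals hint, hr0, hrn]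
    _ ≤ ∑ k ∈ Finset.range n, (B + 2 * (W * h) * (v (r (k + 1)) - v (r k))) :=
        Finset.sum_le_sum fun k hk => hpiece k (Finset.mem_range.mp hk)
    _ = n * B + 2 * (W * (b - a)) * (eVariationOn f (Icc a b)).toReal / n := by
        rw [Finset.sum_add_distrib, ← Finset.mul_sum, Finset.sum_range_sub (fun k => v (r k)),
          hr0, hrn, hva, hvb, sub_zero, Finset.sum_const, Finset.card_range, nsmul_eq_mul]
        simp only [h]
        field_simp

theorem le_two_mul_add_two_sqrt_of_forall_nat {u B D : ℝ} (hB : 0 < B) (hD : 0 ≤ D)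
    (h : ∀ n : ℕ, 0 < n → u ≤ n * B + D / n) : u ≤ 2 * B + 2 * √(B * D) := by
  set s := √(D / B)
  have hs : 0 ≤ s := Real.sqrt_nonneg _
  have hDs : D = B * s ^ 2 := by rw [Real.sq_sqrt (by positivity)]; field_simp
  have hBD : √(B * D) = B * s := by
    rw [hDs, ← mul_assoc, ← sq, Real.sqrt_mul (sq_nonneg B), Real.sqrt_sq hB.le, Real.sqrt_sq hs]
  -- the optimal number of pieces is about `√(D / B)`
  set n := ⌈s⌉₊ + 1
  have hn_ge : s ≤ n := (Nat.le_ceil s).trans (by simp [n])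
  have hn_le : (n : ℝ) ≤ s + 2 := by
    have := Nat.ceil_lt_add_one hs; push_cast [n]; linarith
  have hn : (0 : ℝ) < n := by positivity
  have hsq : D / n ≤ B * s := by
    rw [div_le_iff₀ hn, hDs]
    have : s * s ≤ s * n := mul_le_mul_of_nonneg_left hn_ge hs
    nlinarith
  have := h n (by positivity)
  rw [hBD]
  nlinarith

theorem le_mul_rpow_half_of_le_mul_rpow {g : ℝ → ℝ} {L a b m₀ R β ε : ℝ} (hL : 1 ≤ L)
    (hb : 0 ≤ b) (hR0 : 0 ≤ R) (hm₀ : m₀ ≤ R) (hR : |a| + b * L ^ (β / 2) * √R ≤ R)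
    (hε : 0 ≤ ε) (hεβ : ε ≤ β)
    (hrec : ∀ x, 1 ≤ x → ∀ M, m₀ ≤ M → (∀ y ∈ Icc 1 (L * x), g y ≤ M) → g x ≤ a + b * √M)
    (hg : ∀ x, 1 ≤ x → g x ≤ R * x ^ ε) {x : ℝ} (hx : 1 ≤ x) : g x ≤ R * x ^ (ε / 2) := by
  have hLx : 1 ≤ L * x := one_le_mul_of_one_le_of_one_le hL hx
  have hM : R ≤ R * (L * x) ^ ε := le_mul_of_one_le_right hR0 (Real.one_le_rpow hLx hε)
  have hgx := hrec x hx (R * (L * x) ^ ε) (hm₀.trans hM)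
    fun y hy => (hg y hy.1).trans (by gcongr; exacts [hy.1.trans' zero_le_one, hy.2])
  have hsqrt : √(R * (L * x) ^ ε) ≤ √R * L ^ (β / 2) * x ^ (ε / 2) := by
    rw [Real.sqrt_mul hR0, Real.sqrt_eq_rpow ((L * x) ^ ε), ← Real.rpow_mul (by positivity),
      Real.mul_rpow (by positivity) (by positivity), ← mul_div_assoc, mul_one, mul_assoc]
    gcongr
  have hx1 : 1 ≤ x ^ (ε / 2) := Real.one_le_rpow hx (by positivity)
  calc g x ≤ a + b * √(R * (L * x) ^ ε) := hgx
    _ ≤ |a| * x ^ (ε / 2) + b * L ^ (β / 2) * √R * x ^ (ε / 2) := by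
        have := le_mul_of_one_le_right (abs_nonneg a) hx1
        have := mul_le_mul_of_nonneg_left hsqrt hb
        nlinarith [le_abs_self a]
    _ = (|a| + b * L ^ (β / 2) * √R) * x ^ (ε / 2) := by ring
    _ ≤ R * x ^ (ε / 2) := by gcongr

theorem exists_forall_le_of_le_add_mul_sqrt {g : ℝ → ℝ} {β L a b c m₀ : ℝ} (hβ : 0 ≤ β)
    (hL : 1 ≤ L) (hb : 0 ≤ b) (hgrowth : ∀ x, 1 ≤ x → g x ≤ c * x ^ β)
    (hrec : ∀ x, 1 ≤ x → ∀ M, m₀ ≤ M → (∀ y ∈ Icc 1 (L * x), g y ≤ M) → g x ≤ a + b * √M) :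
    ∃ R, ∀ x, 1 ≤ x → g x ≤ R := by
  set b' := b * L ^ (β / 2)
  have hb' : 0 ≤ b' := by positivity
  set R := max (max c m₀) ((|a| + b' + 1) ^ 2)
  have hR0 : 0 ≤ R := le_max_of_le_right (sq_nonneg _)
  have hR : |a| + b' * √R ≤ R := by
    have hsq : |a| + b' + 1 ≤ √R := Real.le_sqrt_of_sq_le (le_max_right _ _)
    nlinarith [Real.mul_self_sqrt hR0, abs_nonneg a, mul_le_mul_of_nonneg_left hsq (abs_nonneg a)]
  -- the exponent of the a priori bound `g x ≤ R x ^ ε` halves at each round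
  have hiter : ∀ n : ℕ, ∀ x, 1 ≤ x → g x ≤ R * x ^ (β / 2 ^ n) := by
    intro n
    induction n with
    | zero =>
      intro x hx
      simpa using (hgrowth x hx).trans (by gcongr; exact le_max_of_le_left (le_max_left _ _))
    | succ n ih =>
      intro x hx
      simpa [pow_succ, div_div] using le_mul_rpow_half_of_le_mul_rpow hL hb hR0
        (le_max_of_le_left (le_max_right _ _)) hR (by positivity)
        (div_le_self hβ (one_le_pow₀ one_le_two)) hrec ih hx
  refine ⟨R, fun x hx => ?_⟩
  have hlim : Tendsto (fun n : ℕ => R * x ^ (β / 2 ^ n)) atTop (nhds (R * x ^ (0 : ℝ))) := by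
    refine tendsto_const_nhds.mul ((Real.continuousAt_const_rpow (by linarith)).tendsto.comp ?_)
    simpa [div_eq_mul_inv] using
      (tendsto_pow_atTop_nhds_zero_of_lt_one (by norm_num : (0 : ℝ) ≤ 2⁻¹) (by norm_num)).const_mul β
  rw [Real.rpow_zero, mul_one] at hlim
  exact ge_of_tendsto' hlim fun n => hiter n x hx

theorem exists_abs_integral_le_of_tendsto {g : ℝ → ℝ} {I : ℝ}
    (hg : ∀ N, 0 ≤ N → IntervalIntegrable g volume 0 N)
    (hlim : Tendsto (fun N => ∫ t in (0 : ℝ)..N, g t) atTop (nhds I)) :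
    ∃ B, 0 < B ∧ ∀ p q, 0 ≤ p → p ≤ q → |∫ t in p..q, g t| ≤ B := by
  obtain ⟨N₀, hN₀⟩ := Metric.tendsto_atTop.mp hlim 1 one_pos
  set N₁ := max N₀ 0
  set B₀ := max (|I| + 1) (∫ t in (0 : ℝ)..N₁, |g t|)
  have hprim : ∀ N, 0 ≤ N → |∫ t in (0 : ℝ)..N, g t| ≤ B₀ := by
    intro N hN
    rcases le_total N₁ N with h | h
    · have := hN₀ N ((le_max_left _ _).trans h)
      rw [Real.dist_eq] at this
      exact le_max_of_le_left (by linarith [abs_sub_abs_le_abs_sub (∫ t in (0 : ℝ)..N, g t) I])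
    · refine le_max_of_le_right ((intervalIntegral.abs_integral_le_integral_abs hN).trans ?_)
      exact intervalIntegral.integral_mono_interval le_rfl hN h
        (ae_of_all _ fun t => abs_nonneg (g t)) (hg N₁ (le_max_right _ _)).abs
  refine ⟨2 * B₀ + 1, by positivity, fun p q hp hpq => ?_⟩
  rw [← intervalIntegral.integral_interval_sub_left (hg q (hp.trans hpq)) (hg p hp)]
  linarith [abs_sub (∫ t in (0 : ℝ)..q, g t) (∫ t in (0 : ℝ)..p, g t),
    hprim q (hp.trans hpq), hprim p hp]

theorem exists_abs_le_of_tendsto_zero {f : ℝ → ℝ} {a : ℝ}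
    (hf : ∀ b, a ≤ b → BoundedVariationOn f (Icc a b)) (hlim : Tendsto f atTop (nhds 0)) :
    ∃ S, ∀ t, a ≤ t → |f t| ≤ S := by
  obtain ⟨T, hT⟩ := Metric.tendsto_atTop.mp hlim 1 one_pos
  set T₁ := max T a
  refine ⟨max 1 (|f a| + (eVariationOn f (Icc a T₁)).toReal), fun t ht => ?_⟩
  rcases le_total t T₁ with h | h
  · have := (hf T₁ (le_max_right _ _)).dist_le ⟨ht, h⟩ ⟨le_rfl, le_max_right _ _⟩
    rw [Real.dist_eq] at this
    exact le_max_of_le_right (by linarith [abs_sub_abs_le_abs_sub (f t) (f a)])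
  · have := hT t ((le_max_left _ _).trans h)
    rw [Real.dist_eq, sub_zero] at this
    exact le_max_of_le_left this.le

theorem integral_Ioo_eq_sum_integral_dyadic {g : ℝ → ℝ} {a : ℝ} (ha : 0 ≤ a) (m : ℕ)
    (hg : IntegrableOn g (Icc a (2 ^ m * a))) :
    ∫ t in Ioo a (2 ^ m * a), g t =
      ∑ i ∈ Finset.range m, ∫ t in 2 ^ i * a..2 * (2 ^ i * a), g t := by
  have hmono : Monotone fun i : ℕ => (2 : ℝ) ^ i * a := fun i j hij => by
    simp only; gcongr; exact one_le_two
  have hint : ∀ i < m, IntervalIntegrable g volume (2 ^ i * a) (2 ^ (i + 1) * a) := by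
    intro i hi
    refine (hg.mono_set ?_).intervalIntegrable
    rw [uIcc_of_le (hmono i.le_succ)]
    exact Icc_subset_Icc (by simpa using hmono (Nat.zero_le i)) (hmono hi)
  have hsum := intervalIntegral.sum_integral_adjacent_intervals hint
  rw [pow_zero, one_mul] at hsum
  rw [← integral_Ioc_eq_integral_Ioo, ← intervalIntegral.integral_of_le
    (by simpa using hmono (Nat.zero_le m)), ← hsum]
  exact Finset.sum_congr rfl fun i _ => by rw [pow_succ, mul_comm _ (2 : ℝ), mul_assoc]

noncomputable def blockMass (f : ℝ → ℝ) (γ x : ℝ) : ℝ := ∫ t in x..2 * x, t ^ γ * |f t|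

section Block

variable {f : ℝ → ℝ} {γ x : ℝ}

theorem blockMass_nonneg (hx : 0 ≤ x) : 0 ≤ blockMass f γ x :=
  intervalIntegral.integral_nonneg (by linarith) fun t ht =>
    mul_nonneg (Real.rpow_nonneg (hx.trans ht.1) γ) (abs_nonneg _)

theorem rpow_le_two_rpow_abs_mul_of_mem_Icc {t : ℝ} (hx : 0 < x) (ht : t ∈ Icc x (2 * x))
    (e : ℝ) : t ^ e ≤ 2 ^ |e| * x ^ e ∧ x ^ e ≤ 2 ^ |e| * t ^ e := by
  have ht0 : 0 < t := hx.trans_le ht.1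
  exact ⟨rpow_le_rpow_abs_mul_rpow e ht0 hx ht.2 (by linarith [ht.1]),
    rpow_le_rpow_abs_mul_rpow e hx ht0 (by linarith [ht.1]) ht.2⟩

theorem rpow_mul_abs_le (hf : BoundedVariationOn f (Icc x (2 * x))) (hx : 0 < x) :
    x ^ (γ + 1) * |f x| ≤ 2 ^ |γ| * blockMass f γ x +
      (2 ^ |γ|) ^ 2 * (x ^ (γ + 1) * (eVariationOn f (Icc x (2 * x))).toReal) := by
  set V := (eVariationOn f (Icc x (2 * x))).toReal
  have h2x : x ≤ 2 * x := by linarith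
  have hpt : ∀ t ∈ Icc x (2 * x),
      x ^ γ * |f x| ≤ 2 ^ |γ| * (t ^ γ * |f t|) + (2 ^ |γ|) ^ 2 * x ^ γ * V := by
    intro t ht
    obtain ⟨hup, hlow⟩ := rpow_le_two_rpow_abs_mul_of_mem_Icc hx ht γ
    have hfx : |f x| ≤ |f t| + V := by
      have := hf.dist_le (left_mem_Icc.mpr h2x) ht
      rw [Real.dist_eq] at this
      linarith [abs_sub_abs_le_abs_sub (f x) (f t)]
    have ht0 : 0 ≤ t ^ γ := Real.rpow_nonneg (hx.le.trans ht.1) γ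
    have hV : 0 ≤ V := ENNReal.toReal_nonneg
    calc x ^ γ * |f x| ≤ 2 ^ |γ| * t ^ γ * (|f t| + V) := by gcongr
      _ = 2 ^ |γ| * (t ^ γ * |f t|) + 2 ^ |γ| * (t ^ γ * V) := by ring
      _ ≤ 2 ^ |γ| * (t ^ γ * |f t|) + 2 ^ |γ| * (2 ^ |γ| * x ^ γ * V) := by gcongr
      _ = _ := by ring
  have hint := intervalIntegrable_continuousOn_mul h2x (continuousOn_rpow_const_Icc hx γ)
    hf.integrableOn_Icc.abs
  have := intervalIntegral.integral_mono_on h2x intervalIntegrable_const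
    ((hint.const_mul _).add intervalIntegrable_const) hpt
  rw [intervalIntegral.integral_add (hint.const_mul _) intervalIntegrable_const,
    intervalIntegral.integral_const, intervalIntegral.integral_const, smul_eq_mul, smul_eq_mul,
    intervalIntegral.integral_const_mul] at this
  rw [Real.rpow_add_one hx.ne', blockMass]
  calc x ^ γ * x * |f x| = (2 * x - x) * (x ^ γ * |f x|) := by ring
    _ ≤ _ := this
    _ = _ := by ring

theorem integral_abs_div_le_blockMass (hf : IntegrableOn f (Icc x (2 * x))) (hx : 0 < x) :
    ∫ t in x..2 * x, |f t| / t ≤ 2 ^ |γ + 1| * blockMass f γ x / x ^ (γ + 1) := by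
  have h2x : x ≤ 2 * x := by linarith
  have hpt : ∀ t ∈ Icc x (2 * x),
      |f t| / t ≤ 2 ^ |γ + 1| * x ^ (-(γ + 1)) * (t ^ γ * |f t|) := by
    intro t ht
    have ht0 : 0 < t := hx.trans_le ht.1
    have hle := (rpow_le_two_rpow_abs_mul_of_mem_Icc hx ht (-(γ + 1))).1
    rw [abs_neg] at hle
    calc |f t| / t = t ^ (-(γ + 1)) * (t ^ γ * |f t|) := by
          rw [← mul_assoc, ← Real.rpow_add ht0, show -(γ + 1) + γ = -1 by ring,
            Real.rpow_neg_one, div_eq_inv_mul]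
      _ ≤ _ := by gcongr
  have hint := intervalIntegrable_continuousOn_mul h2x (continuousOn_rpow_const_Icc hx γ) hf.abs
  have hinv := intervalIntegrable_continuousOn_mul h2x
    (continuousOn_inv₀.mono fun t ht => (hx.trans_le ht.1).ne') hf.abs
  calc ∫ t in x..2 * x, |f t| / t
      ≤ ∫ t in x..2 * x, 2 ^ |γ + 1| * x ^ (-(γ + 1)) * (t ^ γ * |f t|) :=
        intervalIntegral.integral_mono_on h2x (by simpa [div_eq_inv_mul] using hinv)
          (hint.const_mul _) hpt
    _ = 2 ^ |γ + 1| * blockMass f γ x / x ^ (γ + 1) := by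
        rw [intervalIntegral.integral_const_mul, Real.rpow_neg hx.le, blockMass]
        field_simp

theorem rpow_mul_integral_abs_div_le {y L M : ℝ} (hf : IntegrableOn f (Icc y (2 * y)))
    (hx : 0 < x) (hy : 0 < y) (hxy : x ≤ L * y) (hyx : y ≤ L * x) (hM : blockMass f γ y ≤ M) :
    x ^ (γ + 1) * ∫ t in y..2 * y, |f t| / t ≤ 2 ^ |γ + 1| * L ^ |γ + 1| * M := by
  have hL : 0 < L := pos_of_mul_pos_left (hx.trans_le hxy) hy.le
  calc x ^ (γ + 1) * ∫ t in y..2 * y, |f t| / t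
      ≤ x ^ (γ + 1) * (2 ^ |γ + 1| * blockMass f γ y / y ^ (γ + 1)) := by
        gcongr; exact integral_abs_div_le_blockMass hf hy
    _ = 2 ^ |γ + 1| * (x ^ (γ + 1) / y ^ (γ + 1)) * blockMass f γ y := by ring
    _ ≤ 2 ^ |γ + 1| * L ^ |γ + 1| * M := by
        gcongr
        · exact blockMass_nonneg hy.le
        · rw [div_le_iff₀ (by positivity)]
          exact rpow_le_rpow_abs_mul_rpow (γ + 1) hx hy hxy hyx

theorem blockMass_le_two_mul_add_two_sqrt (hf : BoundedVariationOn f (Icc x (2 * x))) (hx : 0 < x)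
    {B : ℝ} (hB0 : 0 < B)
    (hB : ∀ p q, x ≤ p → p ≤ q → q ≤ 2 * x → |∫ t in p..q, t ^ γ * f t| ≤ B) :
    blockMass f γ x ≤ 2 * B + 2 * √(B * (2 * 2 ^ |γ| *
      (x ^ (γ + 1) * (eVariationOn f (Icc x (2 * x))).toReal))) := by
  have h2x : x ≤ 2 * x := by linarith
  refine le_two_mul_add_two_sqrt_of_forall_nat hB0 (by positivity) fun n hn => ?_
  calc blockMass f γ x ≤ n * B + 2 * (2 ^ |γ| * x ^ γ * (2 * x - x)) *
        (eVariationOn f (Icc x (2 * x))).toReal / n :=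
      integral_mul_abs_le_nat_mul_add_variation_div hn h2x hf (continuousOn_rpow_const_Icc hx γ)
        (fun t ht => Real.rpow_nonneg (hx.le.trans ht.1) γ)
        (fun t ht => (rpow_le_two_rpow_abs_mul_of_mem_Icc hx ht γ).1) hB
    _ = _ := by rw [Real.rpow_add_one hx.ne']; ring

theorem rpow_mul_variation_le {C M : ℝ} {ν : ℕ} (hf : LocallyBoundedVariationOn f (Ioi 0))
    (hC : 0 ≤ C) (hx : 0 < x)
    (hGM : eVariationOn f (Icc x (2 * x)) ≤
      ENNReal.ofReal (C * ∫ t in Ioo (x / 2 ^ ν) (2 ^ ν * x), |f t| / t))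
    (hM : ∀ y ∈ Icc (x / 2 ^ ν) (2 ^ ν * x), blockMass f γ y ≤ M) :
    x ^ (γ + 1) * (eVariationOn f (Icc x (2 * x))).toReal ≤
      C * 2 ^ |γ + 1| * (2 ^ ν) ^ |γ + 1| * (2 * ν * M) := by
  set l : ℝ := 2 ^ ν
  have hl : 1 ≤ l := one_le_pow₀ one_le_two
  have hl0 : 0 < l := by positivity
  set r : ℕ → ℝ := fun i => 2 ^ i * (x / l)
  have hr_pos : ∀ i, 0 < r i := fun i => by positivity
  have hr_mem : ∀ i ≤ 2 * ν, x ≤ l * r i ∧ r i ≤ l * x := by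
    intro i hi
    have h1 : (1 : ℝ) ≤ 2 ^ i := one_le_pow₀ one_le_two
    have h2 : (2 : ℝ) ^ i ≤ l * l := by
      rw [← sq, ← pow_mul, mul_comm]; exact pow_le_pow_right₀ one_le_two hi
    have hlr : l * r i = 2 ^ i * x := by simp only [r]; field_simp
    constructor
    · nlinarith
    · rw [← mul_le_mul_iff_of_pos_left hl0, hlr]; nlinarith
  have hwindow : ∫ t in Ioo (x / l) (l * x), |f t| / t =
      ∑ i ∈ Finset.range (2 * ν), ∫ t in r i..2 * r i, |f t| / t := by
    have hwin : x / l ≤ l * x := (div_le_self hx.le hl).trans (le_mul_of_one_le_left hx.le hl)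
    have hint : IntegrableOn (fun t => |f t| / t) (Icc (x / l) (l * x)) := by
      simpa only [div_eq_inv_mul] using IntegrableOn.continuousOn_mul
        (continuousOn_inv₀.mono fun t ht => ((div_pos hx hl0).trans_le ht.1).ne')
        (hf.boundedVariationOn_Icc (div_pos hx hl0) ((div_pos hx hl0).trans_le hwin)
          |>.integrableOn_Icc.abs) isCompact_Icc
    have hlx : l * x = 2 ^ (2 * ν) * (x / l) := by simp only [l]; rw [pow_mul']; field_simp
    rw [hlx] at hint ⊢
    exact integral_Ioo_eq_sum_integral_dyadic (div_pos hx hl0).le _ hint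
  have hblock : ∀ i < 2 * ν, x ^ (γ + 1) * ∫ t in r i..2 * r i, |f t| / t ≤
      2 ^ |γ + 1| * l ^ |γ + 1| * M := fun i hi =>
    rpow_mul_integral_abs_div_le
      (hf.boundedVariationOn_Icc (hr_pos i) (by linarith [hr_pos i] : (0 : ℝ) < 2 * r i)
        |>.integrableOn_Icc) hx (hr_pos i) (hr_mem i hi.le).1 (hr_mem i hi.le).2
      (hM (r i) ⟨(div_le_iff₀' hl0).mpr (hr_mem i hi.le).1, (hr_mem i hi.le).2⟩)
  have hV : (eVariationOn f (Icc x (2 * x))).toReal ≤ C * ∫ t in Ioo (x / l) (l * x), |f t| / t :=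
    ENNReal.toReal_le_of_le_ofReal (mul_nonneg hC (setIntegral_nonneg measurableSet_Ioo
      fun t ht => div_nonneg (abs_nonneg _) (by linarith [ht.1, div_pos hx hl0]))) hGM
  calc x ^ (γ + 1) * (eVariationOn f (Icc x (2 * x))).toReal
      ≤ C * ∑ i ∈ Finset.range (2 * ν), x ^ (γ + 1) * ∫ t in r i..2 * r i, |f t| / t := by
        rw [← Finset.mul_sum, ← hwindow, mul_left_comm]
        gcongr
    _ ≤ C * ∑ i ∈ Finset.range (2 * ν), 2 ^ |γ + 1| * l ^ |γ + 1| * M :=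
        mul_le_mul_of_nonneg_left (Finset.sum_le_sum fun i hi =>
          hblock i (Finset.mem_range.mp hi)) hC
    _ = _ := by simp only [Finset.sum_const, Finset.card_range, nsmul_eq_mul]; push_cast; ring

theorem integrableOn_rpow_mul_abs_Ioc (hf : LocallyBoundedVariationOn f (Ioi 0))
    (hint : IntegrableOn (fun t => t ^ γ * |f t|) (Ioo 0 1)) (N : ℝ) :
    IntegrableOn (fun t => t ^ γ * |f t|) (Ioc 0 N) := by
  have hfar : IntegrableOn (fun t => t ^ γ * |f t|) (Icc 1 (max N 1)) :=
    IntegrableOn.continuousOn_mul (continuousOn_rpow_const_Icc one_pos γ)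
      (hf.boundedVariationOn_Icc (mem_Ioi.mpr one_pos)
        (mem_Ioi.mpr (lt_max_of_lt_right one_pos))).integrableOn_Icc.abs isCompact_Icc
  refine (hint.union hfar).mono_set fun t ht => ?_
  rcases lt_or_ge t 1 with h | h
  · exact Or.inl ⟨ht.1, h⟩
  · exact Or.inr ⟨h, ht.2.trans (le_max_left _ _)⟩

theorem intervalIntegrable_rpow_mul (hf : LocallyBoundedVariationOn f (Ioi 0))
    (hint : IntegrableOn (fun t => t ^ γ * |f t|) (Ioo 0 1)) {N : ℝ} (hN : 0 ≤ N) :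
    IntervalIntegrable (fun t => t ^ γ * f t) volume 0 N := by
  rw [intervalIntegrable_iff_integrableOn_Ioc_of_le hN]
  refine (integrableOn_rpow_mul_abs_Ioc hf hint N).mono' ?_ ?_
  · have hrpow : AEMeasurable (fun t : ℝ => t ^ γ) (volume.restrict (Ioi 0)) :=
      (continuousOn_id.rpow_const fun t ht => Or.inl (ne_of_gt ht)).aemeasurable measurableSet_Ioi
    exact (hrpow.mul (hf.aemeasurable_restrict measurableSet_Ioi)).mono_measure
      (Measure.restrict_mono Ioc_subset_Ioi_self le_rfl) |>.aestronglyMeasurable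
  · filter_upwards [ae_restrict_mem measurableSet_Ioc] with t ht
    rw [norm_mul, Real.norm_eq_abs, Real.norm_eq_abs, abs_of_nonneg (Real.rpow_nonneg ht.1.le γ)]

theorem blockMass_le_of_abs_le {S : ℝ} (hf : BoundedVariationOn f (Icc x (2 * x))) (hx : 0 < x)
    (hS : ∀ t ∈ Icc x (2 * x), |f t| ≤ S) : blockMass f γ x ≤ 2 ^ |γ| * S * x ^ (γ + 1) := by
  have h2x : x ≤ 2 * x := by linarith
  calc blockMass f γ x ≤ ∫ t in x..2 * x, 2 ^ |γ| * x ^ γ * S :=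
        intervalIntegral.integral_mono_on h2x
          (intervalIntegrable_continuousOn_mul h2x (continuousOn_rpow_const_Icc hx γ)
            hf.integrableOn_Icc.abs) intervalIntegrable_const fun t ht =>
          mul_le_mul (rpow_le_two_rpow_abs_mul_of_mem_Icc hx ht γ).1 (hS t ht) (abs_nonneg _)
            (by positivity)
    _ = 2 ^ |γ| * S * x ^ (γ + 1) := by
        rw [intervalIntegral.integral_const, smul_eq_mul, Real.rpow_add_one hx.ne']; ring

theorem blockMass_le_add_mul_sqrt {C B M : ℝ} {ν : ℕ} (hf : LocallyBoundedVariationOn f (Ioi 0))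
    (hC : 0 ≤ C) (hx : 0 < x)
    (hGM : eVariationOn f (Icc x (2 * x)) ≤
      ENNReal.ofReal (C * ∫ t in Ioo (x / 2 ^ ν) (2 ^ ν * x), |f t| / t))
    (hB0 : 0 < B) (hB : ∀ p q, x ≤ p → p ≤ q → q ≤ 2 * x → |∫ t in p..q, t ^ γ * f t| ≤ B)
    (hM : ∀ y ∈ Icc (x / 2 ^ ν) (2 ^ ν * x), blockMass f γ y ≤ M) :
    blockMass f γ x ≤ 2 * B +
      2 * √(B * (2 * 2 ^ |γ| * (C * 2 ^ |γ + 1| * (2 ^ ν) ^ |γ + 1| * (2 * ν)))) * √M := by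
  have hl : (1 : ℝ) ≤ 2 ^ ν := one_le_pow₀ one_le_two
  have hM0 : 0 ≤ M := (blockMass_nonneg hx.le).trans
    (hM x ⟨div_le_self hx.le hl, le_mul_of_one_le_left hx.le hl⟩)
  calc blockMass f γ x
      ≤ 2 * B + 2 * √(B * (2 * 2 ^ |γ| *
          (x ^ (γ + 1) * (eVariationOn f (Icc x (2 * x))).toReal))) :=
        blockMass_le_two_mul_add_two_sqrt
          (hf.boundedVariationOn_Icc hx (by linarith : (0 : ℝ) < 2 * x)) hx hB0 hB
    _ ≤ 2 * B + 2 * √(B * (2 * 2 ^ |γ| * (C * 2 ^ |γ + 1| * (2 ^ ν) ^ |γ + 1| * (2 * ν * M)))) := by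
        gcongr 2 * B + 2 * √(B * (2 * 2 ^ |γ| * ?_))
        exact rpow_mul_variation_le hf hC hx hGM hM
    _ = _ := by
        rw [mul_assoc _ (√_), ← Real.sqrt_mul (by positivity)]
        ring_nf

theorem exists_blockMass_le {C B : ℝ} {ν : ℕ} (hf : LocallyBoundedVariationOn f (Ioi 0))
    (hlim : Tendsto f atTop (nhds 0)) (hC : 0 ≤ C)
    (hGM : ∀ x > (0 : ℝ), eVariationOn f (Icc x (2 * x)) ≤
      ENNReal.ofReal (C * ∫ t in Ioo (x / 2 ^ ν) (2 ^ ν * x), |f t| / t))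
    (hint : IntegrableOn (fun t => t ^ γ * |f t|) (Ioo 0 1)) (hB0 : 0 < B)
    (hB : ∀ p q, 1 ≤ p → p ≤ q → |∫ t in p..q, t ^ γ * f t| ≤ B) :
    ∃ A, ∀ y, 0 < y → blockMass f γ y ≤ A := by
  set A₀ := ∫ t in (0 : ℝ)..2, t ^ γ * |f t|
  have hsmall : ∀ y ∈ Ioc (0 : ℝ) 1, blockMass f γ y ≤ A₀ := fun y hy =>
    intervalIntegral.integral_mono_interval hy.1.le (by linarith [hy.1]) (by linarith [hy.2])
      (by filter_upwards [ae_restrict_mem measurableSet_Ioc] with t ht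
          exact mul_nonneg (Real.rpow_nonneg ht.1.le γ) (abs_nonneg _))
      ((intervalIntegrable_iff_integrableOn_Ioc_of_le zero_le_two).mpr
        (integrableOn_rpow_mul_abs_Ioc hf hint 2))
  obtain ⟨S, hS⟩ := exists_abs_le_of_tendsto_zero
    (fun b hb => hf.boundedVariationOn_Icc (mem_Ioi.mpr one_pos) (one_pos.trans_le hb)) hlim
  have hS0 : 0 ≤ S := (abs_nonneg _).trans (hS 1 le_rfl)
  have hgrowth : ∀ x, 1 ≤ x → blockMass f γ x ≤ 2 ^ |γ| * S * x ^ max (γ + 1) 0 := fun x hx =>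
    have hx0 : 0 < x := one_pos.trans_le hx
    (blockMass_le_of_abs_le (hf.boundedVariationOn_Icc hx0 (by linarith : (0 : ℝ) < 2 * x)) hx0
      fun t ht => hS t (hx.trans ht.1)).trans
      (by gcongr 2 ^ |γ| * S * ?_; exact Real.rpow_le_rpow_of_exponent_le hx (le_max_left _ _))
  have hrec : ∀ x, 1 ≤ x → ∀ M, A₀ ≤ M → (∀ y ∈ Icc 1 (2 ^ ν * x), blockMass f γ y ≤ M) →
      blockMass f γ x ≤ 2 * B +
        2 * √(B * (2 * 2 ^ |γ| * (C * 2 ^ |γ + 1| * (2 ^ ν) ^ |γ + 1| * (2 * ν)))) * √M := by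
    intro x hx M hA₀M hM
    have hx0 : 0 < x := one_pos.trans_le hx
    refine blockMass_le_add_mul_sqrt hf hC hx0 (hGM x hx0) hB0
      (fun p q hp hpq _ => hB p q (hx.trans hp) hpq) fun y hy => ?_
    have hy0 : 0 < y := (div_pos hx0 (by positivity)).trans_le hy.1
    rcases le_total y 1 with h | h
    · exact (hsmall y ⟨hy0, h⟩).trans hA₀M
    · exact hM y ⟨h, hy.2⟩
  obtain ⟨R, hR⟩ := exists_forall_le_of_le_add_mul_sqrt (le_max_right _ _)
    (one_le_pow₀ one_le_two) (by positivity) hgrowth hrec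
  refine ⟨max A₀ R, fun y hy => ?_⟩
  rcases le_total y 1 with h | h
  · exact (hsmall y ⟨hy, h⟩).trans (le_max_left _ _)
  · exact (hR y h).trans (le_max_right _ _)

end Block

theorem GMFun_weighted_sup_finite_general (f : ℝ → ℝ) (C : ℝ) (hC : 1 < C) (ν : ℕ)
    (hGM : GMFun C (2^ν) f) (α : ℝ)
    (hint : IntegrableOn (fun t => t ^ (2*α+1) * |f t|) (Set.Ioo 0 1))
    (hconv : ∃ I : ℝ, Tendsto (fun N : ℝ => ∫ t in (0:ℝ)..N, t ^ (2*α+1) * f t)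
      atTop (nhds I)) :
    ∃ M : ℝ, ∀ t > (0:ℝ), t ^ (2*α+2) * |f t| ≤ M := by
  obtain ⟨hBV, hlim, hvar⟩ := hGM
  obtain ⟨I, hI⟩ := hconv
  set γ := 2 * α + 1
  obtain ⟨B, hB0, hB⟩ := exists_abs_integral_le_of_tendsto
    (fun N hN => intervalIntegrable_rpow_mul hBV hint hN) hI
  obtain ⟨A, hA⟩ := exists_blockMass_le hBV hlim (by linarith) hvar hint hB0
    fun p q hp hpq => hB p q (by linarith) hpq
  refine ⟨2 ^ |γ| * A + (2 ^ |γ|) ^ 2 * (C * 2 ^ |γ + 1| * (2 ^ ν) ^ |γ + 1| * (2 * ν * A)),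
    fun x hx => ?_⟩
  rw [show 2 * α + 2 = γ + 1 by ring]
  calc x ^ (γ + 1) * |f x|
      ≤ 2 ^ |γ| * blockMass f γ x +
          (2 ^ |γ|) ^ 2 * (x ^ (γ + 1) * (eVariationOn f (Icc x (2 * x))).toReal) :=
        rpow_mul_abs_le (hBV.boundedVariationOn_Icc hx (mem_Ioi.mpr (by linarith))) hx
    _ ≤ _ := by
        gcongr 2 ^ |γ| * ?_ + (2 ^ |γ|) ^ 2 * ?_
        · exact hA x hx
        · exact rpow_mul_variation_le hBV (by linarith) hx (hvar x hx) fun y hy =>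
            hA y ((div_pos hx (by positivity)).trans_le hy.1)

/-- If `f` is real-valued general monotone, `t^{2α+1} f(t) ∈ L¹(0,1)` and
`∫_0^∞ t^{2α+1} f(t) dt` converges, then `sup_{t>0} t^{2α+2} |f(t)| < ∞`. -/
theorem GMFun_weighted_sup_finite (f : ℝ → ℝ) (C : ℝ) (hC : 1 < C) (ν : ℕ) (hν : 1 ≤ ν)
    (hGM : GMFun C (2^ν) f) (α : ℝ)
    (hint : IntegrableOn (fun t => t ^ (2*α+1) * |f t|) (Set.Ioo 0 1))
    (hconv : ∃ I : ℝ, Tendsto (fun N : ℝ => ∫ t in (0:ℝ)..N, t ^ (2*α+1) * f t)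
      atTop (nhds I)) :
    ∃ M : ℝ, ∀ t > (0:ℝ), t ^ (2*α+2) * |f t| ≤ M :=
  GMFun_weighted_sup_finite_general f C hC ν hGM α hint hconv
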